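/- arXiv:2305.00587 — 6 statements merged into one kernel-verified Lean document; each statement's English description precedes it below -/
import Mathlib

section
/- Let S be an almost integral subdirectly irreducible semiring with zero 0 and least nonzero element e. If |S| ≥ 3, then e² = 0; in particular, S is not multiplicatively idempotent. -/
def IsCong {T : Type} (add mul : T → T → T) (r : T → T → Prop) : Prop :=
  Equivalence r ∧ (∀ a b c d, r a b → r c d → r (add a c) (add b d)) ∧
    (∀ a b c d, r a b → r c d → r (mul a c) (mul b d))

def SubIrr {T : Type} (add mul : T → T → T) : Prop :=
  ∃ r : T → T → Prop, IsCong add mul r ∧ r ≠ (· = ·) ∧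
    ∀ s : T → T → Prop, IsCong add mul s → s ≠ (· = ·) → ∀ a b, r a b → s a b

def CongSimple {T : Type} (add mul : T → T → T) : Prop :=
  (∃ a b : T, a ≠ b) ∧
    ∀ r : T → T → Prop, IsCong add mul r → r = (· = ·) ∨ r = fun _ _ => True

def IsSemiring {S : Type} (add mul : S → S → S) : Prop :=
  (∀ a b, add a b = add b a) ∧ (∀ a b c, add (add a b) c = add a (add b c)) ∧
    (∀ a b c, mul (mul a b) c = mul a (mul b c)) ∧
    (∀ a b c, mul a (add b c) = add (mul a b) (mul a c)) ∧
    (∀ a b c, mul (add a b) c = add (mul a c) (mul b c))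

def finSum {S : Type} (add : S → S → S) : {n : ℕ} → (Fin (n + 1) → S) → S
  | 0, f => f 0
  | _ + 1, f => add (finSum add fun i => f i.castSucc) (f (Fin.last _))

def matAdd {S : Type} (add : S → S → S) {n : ℕ} (A B : Fin n → Fin n → S) :
    Fin n → Fin n → S :=
  fun i j => add (A i j) (B i j)

def matMul {S : Type} (add mul : S → S → S) {n : ℕ}
    (A B : Fin (n + 1) → Fin (n + 1) → S) : Fin (n + 1) → Fin (n + 1) → S :=
  fun i j => finSum add fun k => mul (A i k) (B k j)

def AlmostIntegral {S : Type} (add mul : S → S → S) : Prop :=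
  IsSemiring add mul ∧ (∀ a : S, add a a = a) ∧
    ∀ a b : S, add (add (mul a b) (mul b a)) a = a

def IsZero {S : Type} (add mul : S → S → S) (z : S) : Prop :=
  ∀ x, mul z x = z ∧ mul x z = z ∧ add z x = x

def SepCond {S : Type} (mul : S → S → S) (z : S) (a b : S) : Prop :=
  (a ≠ z ∧ b = z) ∨ (∃ c, mul c a ≠ z ∧ mul c b = z) ∨
    (∃ d, mul a d ≠ z ∧ mul b d = z) ∨
    ∃ c d, mul (mul c a) d ≠ z ∧ mul (mul c b) d = z

abbrev sRel {S : Type} (z e : S) : S → S → Prop :=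
  fun a b => a = b ∨ ((a = z ∨ a = e) ∧ (b = z ∨ b = e))

abbrev vRel {S : Type} (mul : S → S → S) (z : S) : S → S → Prop :=
  fun a b =>
    (a = z ↔ b = z) ∧ (∀ c, mul c a = z ↔ mul c b = z) ∧
      (∀ d, mul a d = z ↔ mul b d = z) ∧
      (∀ c d, mul (mul c a) d = z ↔ mul (mul c b) d = z)

/-- In an almost integral subdirectly irreducible semiring with zero `z` and
least nonzero element `e`, if `|S| ≥ 3` then `e² = z` and `S` is not
multiplicatively idempotent. -/
theorem stmt_14 {S : Type} (add mul : S → S → S) (hS : AlmostIntegral add mul)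
    (hsi : SubIrr add mul) (z : S) (hz : IsZero add mul z)
    (e : S) (he : e ≠ z) (hleast : ∀ x : S, x ≠ z → add e x = x)
    (hcard : ∃ a b c : S, a ≠ b ∧ a ≠ c ∧ b ≠ c) :
    mul e e = z ∧ ∃ x : S, mul x x ≠ x := by
  obtain ⟨⟨hcomm, hassoc, hmassoc, hdistl, hdistr⟩, hidem, hai⟩ := hS
  have addz : ∀ a : S, add a z = a := fun a => (hcomm a z).trans ((hz a).2.2)
  have addez : add e z = e := addz e
  have sumz : ∀ a b : S, add a b = z → a = z := by
    intro a b h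
    calc a = add a z := (addz a).symm
      _ = add a (add a b) := by rw [h]
      _ = add (add a a) b := (hassoc a a b).symm
      _ = add a b := by rw [hidem]
      _ = z := h
  have sumz_iff : ∀ a b : S, add a b = z ↔ (a = z ∧ b = z) := by
    intro a b
    constructor
    · intro h; exact ⟨sumz a b h, sumz b a ((hcomm b a).trans h)⟩
    · rintro ⟨h1, h2⟩; rw [h1, h2]; exact (hz z).2.2
  have step : ∀ x y a : S, add (add x y) a = a → add x a = a := by
    intro x y a h
    calc add x a = add x (add (add x y) a) := by rw [h]
      _ = add (add x (add x y)) a := (hassoc _ _ _).symm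
      _ = add (add (add x x) y) a := by rw [hassoc x x y]
      _ = add (add x y) a := by rw [hidem]
      _ = a := h
  have leMulL : ∀ a b : S, add (mul a b) a = a := fun a b => step _ _ _ (hai a b)
  have leMulR : ∀ a b : S, add (mul b a) a = a := by
    intro a b
    apply step (mul b a) (mul a b)
    rw [hcomm (mul b a) (mul a b)]
    exact hai a b
  have antisym : ∀ u v : S, add u v = v → add v u = u → u = v := by
    intro u v h1 h2; rw [← h2, hcomm]; exact h1
  have letrans : ∀ a b c : S, add a b = b → add b c = c → add a c = c := by
    intro a b c h1 h2
    calc add a c = add a (add b c) := by rw [h2]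
      _ = add (add a b) c := (hassoc _ _ _).symm
      _ = add b c := by rw [h1]
      _ = c := h2
  have monL : ∀ a b c : S, add a b = b → add (mul c a) (mul c b) = mul c b := by
    intro a b c h; rw [← hdistl, h]
  have monR : ∀ a b c : S, add a b = b → add (mul a c) (mul b c) = mul b c := by
    intro a b c h; rw [← hdistr, h]
  have nz : ∀ x : S, add e x = x → x ≠ z := by
    intro x h hx
    apply he
    rw [hx] at h
    exact addez.symm.trans h
  -- the congruence collapsing {z, e}
  have hscong : IsCong add mul (sRel z e) := by
    have absorb : ∀ a x : S, a ≠ z → (x = z ∨ x = e) → add a x = a := by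
      intro a x ha hx
      rcases hx with h | h
      · rw [h]; exact addz a
      · rw [h, hcomm]; exact hleast a ha
    have closA : ∀ x y : S, (x = z ∨ x = e) → (y = z ∨ y = e) →
        (add x y = z ∨ add x y = e) := by
      intro x y hx hy
      rcases hx with h | h <;> rcases hy with h' | h' <;> rw [h, h']
      · exact Or.inl ((hz z).2.2)
      · exact Or.inr ((hz e).2.2)
      · exact Or.inr addez
      · exact Or.inr (hidem e)
    have smallL : ∀ x y : S, (x = z ∨ x = e) → (mul x y = z ∨ mul x y = e) := by
      intro x y hx
      rcases hx with h | h
      · rw [h]; exact Or.inl (hz y).1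
      · rw [h]
        by_cases h' : mul e y = z
        · exact Or.inl h'
        · exact Or.inr (antisym _ _ (leMulL e y) (hleast _ h'))
    have smallR : ∀ x y : S, (x = z ∨ x = e) → (mul y x = z ∨ mul y x = e) := by
      intro x y hx
      rcases hx with h | h
      · rw [h]; exact Or.inl (hz y).2.1
      · rw [h]
        by_cases h' : mul y e = z
        · exact Or.inl h'
        · exact Or.inr (antisym _ _ (leMulR e y) (hleast _ h'))
    refine ⟨⟨fun a => Or.inl rfl, ?_, ?_⟩, ?_, ?_⟩
    · rintro a b (h | ⟨h1, h2⟩)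
      · exact Or.inl h.symm
      · exact Or.inr ⟨h2, h1⟩
    · rintro a b c (h | ⟨h1, h2⟩) (h' | ⟨h1', h2'⟩)
      · exact Or.inl (h.trans h')
      · exact Or.inr ⟨h ▸ h1', h2'⟩
      · exact Or.inr ⟨h1, h' ▸ h2⟩
      · exact Or.inr ⟨h1, h2'⟩
    · rintro a b c d (h | ⟨h1, h2⟩) (h' | ⟨h1', h2'⟩)
      · exact Or.inl (by rw [h, h'])
      · subst h
        by_cases ha : a = z
        · subst ha; rw [(hz c).2.2, (hz d).2.2]; exact Or.inr ⟨h1', h2'⟩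
        · rw [absorb a c ha h1', absorb a d ha h2']; exact Or.inl rfl
      · subst h'
        by_cases hc : c = z
        · subst hc; rw [addz a, addz b]; exact Or.inr ⟨h1, h2⟩
        · rw [hcomm a c, hcomm b c, absorb c a hc h1, absorb c b hc h2]
          exact Or.inl rfl
      · exact Or.inr ⟨closA a c h1 h1', closA b d h2 h2'⟩
    · rintro a b c d (h | ⟨h1, h2⟩) (h' | ⟨h1', h2'⟩)
      · exact Or.inl (by rw [h, h'])
      · subst h; exact Or.inr ⟨smallR c a h1', smallR d a h2'⟩
      · subst h'; exact Or.inr ⟨smallL a c h1, smallL b c h2⟩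
      · exact Or.inr ⟨smallL a c h1, smallL b d h2⟩
  have hsne : sRel z e ≠ (· = ·) := by
    intro h
    have hze : sRel z e z e := Or.inr ⟨Or.inl rfl, Or.inr rfl⟩
    rw [h] at hze
    exact he hze.symm
  -- the annihilator congruence
  have hvcong : IsCong add mul (vRel mul z) := by
    refine ⟨⟨fun a => ⟨Iff.rfl, fun _ => Iff.rfl, fun _ => Iff.rfl,
        fun _ _ => Iff.rfl⟩, ?_, ?_⟩, ?_, ?_⟩
    · rintro a b ⟨p1, p2, p3, p4⟩
      exact ⟨p1.symm, fun c => (p2 c).symm, fun d => (p3 d).symm,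
        fun c d => (p4 c d).symm⟩
    · rintro a b c ⟨p1, p2, p3, p4⟩ ⟨q1, q2, q3, q4⟩
      exact ⟨p1.trans q1, fun x => (p2 x).trans (q2 x),
        fun y => (p3 y).trans (q3 y), fun x y => (p4 x y).trans (q4 x y)⟩
    · rintro a b c d ⟨p1, p2, p3, p4⟩ ⟨q1, q2, q3, q4⟩
      refine ⟨?_, ?_, ?_, ?_⟩
      · rw [sumz_iff, sumz_iff]; exact and_congr p1 q1
      · intro x; rw [hdistl, hdistl, sumz_iff, sumz_iff]
        exact and_congr (p2 x) (q2 x)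
      · intro y; rw [hdistr, hdistr, sumz_iff, sumz_iff]
        exact and_congr (p3 y) (q3 y)
      · intro x y
        rw [hdistl, hdistl, hdistr, hdistr, sumz_iff, sumz_iff]
        exact and_congr (p4 x y) (q4 x y)
    · rintro a b c d ⟨p1, p2, p3, p4⟩ ⟨q1, q2, q3, q4⟩
      refine ⟨?_, ?_, ?_, ?_⟩
      · exact (p3 c).trans (q2 b)
      · intro x
        rw [← hmassoc, ← hmassoc]
        exact (p4 x c).trans (q2 (mul x b))
      · intro y
        rw [hmassoc, hmassoc]
        refine (p3 (mul c y)).trans ?_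
        rw [← hmassoc, ← hmassoc]
        exact q4 b y
      · intro x y
        rw [← hmassoc x a c, ← hmassoc x b d,
          hmassoc (mul x a) c y, hmassoc (mul x b) d y]
        refine (p4 x (mul c y)).trans ?_
        rw [← hmassoc, ← hmassoc]
        exact q4 (mul x b) y
  have heez : mul e e = z := by
    by_contra hne
    have hee : mul e e = e := antisym _ _ (leMulL e e) (hleast _ hne)
    obtain ⟨r, hrc, hrne, hrmin⟩ := hsi
    have hex : ∃ p q : S, p ≠ q ∧ r p q := by
      by_contra hnex
      apply hrne
      funext p q
      show r p q = (p = q)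
      apply propext
      constructor
      · intro hpq
        by_contra hne'
        exact hnex ⟨p, q, hne', hpq⟩
      · intro hpq
        exact hpq ▸ hrc.1.refl p
    obtain ⟨p, q, hpq, hrpq⟩ := hex
    have hspq := hrmin _ hscong hsne p q hrpq
    have hrze : r z e := by
      rcases hspq with h | ⟨h1, h2⟩
      · exact absurd h hpq
      · rcases h1 with h1 | h1 <;> rcases h2 with h2 | h2
        · exact absurd (h1.trans h2.symm) hpq
        · exact h1 ▸ h2 ▸ hrpq
        · exact hrc.1.symm (h2 ▸ h1 ▸ hrpq)
        · exact absurd (h1.trans h2.symm) hpq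
    by_cases hveq : vRel mul z = (· = ·)
    · obtain ⟨a, b, c, hab, hac, hbc⟩ := hcard
      have hw : ∃ w : S, w ≠ z ∧ w ≠ e := by
        by_contra hnw
        push_neg at hnw
        have ha : a = z ∨ a = e := by
          by_cases h' : a = z
          · exact Or.inl h'
          · exact Or.inr (hnw a h')
        have hb : b = z ∨ b = e := by
          by_cases h' : b = z
          · exact Or.inl h'
          · exact Or.inr (hnw b h')
        have hc : c = z ∨ c = e := by
          by_cases h' : c = z
          · exact Or.inl h'
          · exact Or.inr (hnw c h')
        rcases ha with h | h <;> rcases hb with h' | h' <;>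
          rcases hc with h'' | h'' <;>
          first
            | exact hab (h.trans h'.symm)
            | exact hac (h.trans h''.symm)
            | exact hbc (h'.trans h''.symm)
      obtain ⟨w, hwz, hwe⟩ := hw
      have h_ce : ∀ c', c' ≠ z → add e (mul c' e) = mul c' e := by
        intro c' hc'
        have h := monR e c' e (hleast c' hc')
        rwa [hee] at h
      have h_ec : ∀ d', d' ≠ z → add e (mul e d') = mul e d' := by
        intro d' hd'
        have h := monL e d' e (hleast d' hd')
        rwa [hee] at h
      have hvew : vRel mul z e w := by
        refine ⟨iff_of_false he hwz, ?_, ?_, ?_⟩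
        · intro x
          by_cases hx : x = z
          · subst hx; rw [(hz e).1, (hz w).1]
          · have hxe : add e (mul x e) = mul x e := h_ce x hx
            have hxw : add e (mul x w) = mul x w :=
              letrans _ _ _ hxe (monL e w x (hleast w hwz))
            exact iff_of_false (nz _ hxe) (nz _ hxw)
        · intro y
          by_cases hy : y = z
          · subst hy; rw [(hz e).2.1, (hz w).2.1]
          · have hey : add e (mul e y) = mul e y := h_ec y hy
            have hwy : add e (mul w y) = mul w y :=
              letrans _ _ _ hey (monR e w y (hleast w hwz))
            exact iff_of_false (nz _ hey) (nz _ hwy)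
        · intro x y
          by_cases hx : x = z
          · subst hx; rw [(hz e).1, (hz w).1]
          · by_cases hy : y = z
            · subst hy; rw [(hz (mul x e)).2.1, (hz (mul x w)).2.1]
            · have h1 : add e (mul (mul x e) y) = mul (mul x e) y :=
                letrans _ _ _ (h_ec y hy) (monR e (mul x e) y (h_ce x hx))
              have h2 : add e (mul (mul x w) y) = mul (mul x w) y :=
                letrans _ _ _ h1 (monR _ _ y (monL e w x (hleast w hwz)))
              exact iff_of_false (nz _ h1) (nz _ h2)
      rw [hveq] at hvew
      exact hwe hvew.symm
    · have hvze := hrmin _ hvcong hveq z e hrze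
      exact he (hvze.1.mp rfl)
  refine ⟨heez, e, ?_⟩
  rw [heez]
  exact Ne.symm he
end

section
/- Let S be a commutative almost integral subdirectly irreducible semiring with zero 0 and least nonzero element e. If a ∈ S satisfies ae ≠ 0, then a is the greatest element of S. Consequently, if S has a unity 1, then x + y = 1 implies x = 1 or y = 1. -/
theorem theta_trivial {S : Type} (add mul : S → S → S) (hS : AlmostIntegral add mul)
    (hcomm : ∀ a b : S, mul a b = mul b a)
    (hsi : SubIrr add mul) (z : S) (hz : IsZero add mul z)
    (e : S) (he : e ≠ z) (hleast : ∀ x : S, x ≠ z → add e x = x) :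
    ∀ u v : S, ((u = z ↔ v = z) ∧ ∀ s, (mul s u = z ↔ mul s v = z)) → u = v := by
  classical
  obtain ⟨⟨hadd_comm, hadd_assoc, hmul_assoc, hldist, hrdist⟩, hidem, hai⟩ := hS
  have habs : ∀ a b, add (mul a b) a = a := by
    intro a b
    have h := hai a b
    rwa [hcomm b a, hidem (mul a b)] at h
  have haddz : ∀ x, add x z = x := fun x => by rw [hadd_comm]; exact (hz x).2.2
  have hsum_zero : ∀ a b : S, add a b = z → a = z ∧ b = z := by
    intro a b h
    constructor
    · have h1 : add a (add a b) = add a b := by rw [← hadd_assoc, hidem]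
      rw [h, haddz] at h1; exact h1
    · have h1 : add b (add a b) = add a b := by
        rw [hadd_comm a b, ← hadd_assoc, hidem]
      rw [h, haddz] at h1; exact h1
  have hsum_iff : ∀ a b : S, add a b = z ↔ (a = z ∧ b = z) := by
    intro a b
    constructor
    · exact hsum_zero a b
    · rintro ⟨ha, hb⟩; rw [ha, hb]; exact hidem z
  have h_me : ∀ c, mul c e = z ∨ mul c e = e := by
    intro c
    by_cases h : mul c e = z
    · exact Or.inl h
    · right
      have h1 : add (mul c e) e = mul c e := by rw [hadd_comm]; exact hleast _ h
      have h2 : add (mul c e) e = e := by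
        have h3 := habs e c
        rwa [hcomm e c] at h3
      rw [h1] at h2; exact h2
  have hperm : ∀ s a c, mul (mul s c) a = mul s (mul a c) := fun s a c => by
    rw [hmul_assoc, hcomm c a]
  -- the {z, e}-collapsing congruence
  set r0 : S → S → Prop := fun u v => u = v ∨ (u = z ∧ v = e) ∨ (u = e ∧ v = z) with hr0def
  have hr0symm : ∀ x y, r0 x y → r0 y x := by
    rintro x y (rfl | ⟨rfl, rfl⟩ | ⟨rfl, rfl⟩)
    · exact Or.inl rfl
    · exact Or.inr (Or.inr ⟨rfl, rfl⟩)
    · exact Or.inr (Or.inl ⟨rfl, rfl⟩)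
  have hadd0 : ∀ x, r0 (add x z) (add x e) := by
    intro x
    by_cases h : x = z
    · rw [h]; exact Or.inr (Or.inl ⟨haddz z, (hz e).2.2⟩)
    · left; rw [haddz, hadd_comm, hleast x h]
  have hmul0 : ∀ x, r0 (mul x z) (mul x e) := by
    intro x
    rcases h_me x with h | h
    · left; rw [(hz x).2.1, h]
    · rw [(hz x).2.1, h]; exact Or.inr (Or.inl ⟨rfl, rfl⟩)
  have hr0cong : IsCong add mul r0 := by
    refine ⟨⟨fun x => Or.inl rfl, fun {x y} => hr0symm x y, ?_⟩, ?_, ?_⟩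
    · rintro x y w (rfl | ⟨rfl, rfl⟩ | ⟨rfl, rfl⟩) hyw
      · exact hyw
      · rcases hyw with rfl | ⟨h1, rfl⟩ | ⟨h1, rfl⟩
        · exact Or.inr (Or.inl ⟨rfl, rfl⟩)
        · exact absurd h1 he
        · exact Or.inl rfl
      · rcases hyw with rfl | ⟨h1, rfl⟩ | ⟨h1, rfl⟩
        · exact Or.inr (Or.inr ⟨rfl, rfl⟩)
        · exact Or.inl rfl
        · exact absurd h1.symm he
    · rintro a b c d hab hcd
      rcases hab with rfl | ⟨ha, hb⟩ | ⟨ha, hb⟩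
      · rcases hcd with rfl | ⟨hc, hd⟩ | ⟨hc, hd⟩
        · exact Or.inl rfl
        · rw [hc, hd]; exact hadd0 a
        · rw [hc, hd]; exact hr0symm _ _ (hadd0 a)
      · rcases hcd with rfl | ⟨hc, hd⟩ | ⟨hc, hd⟩
        · rw [ha, hb, hadd_comm z c, hadd_comm e c]; exact hadd0 c
        · rw [ha, hb, hc, hd]; exact Or.inr (Or.inl ⟨haddz z, hidem e⟩)
        · rw [ha, hb, hc, hd]; left; rw [(hz e).2.2, haddz]
      · rcases hcd with rfl | ⟨hc, hd⟩ | ⟨hc, hd⟩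
        · rw [ha, hb, hadd_comm e c, hadd_comm z c]; exact hr0symm _ _ (hadd0 c)
        · rw [ha, hb, hc, hd]; left; rw [haddz, (hz e).2.2]
        · rw [ha, hb, hc, hd]; exact Or.inr (Or.inr ⟨hidem e, haddz z⟩)
    · rintro a b c d hab hcd
      rcases hab with rfl | ⟨ha, hb⟩ | ⟨ha, hb⟩
      · rcases hcd with rfl | ⟨hc, hd⟩ | ⟨hc, hd⟩
        · exact Or.inl rfl
        · rw [hc, hd]; exact hmul0 a
        · rw [hc, hd]; exact hr0symm _ _ (hmul0 a)
      · rcases hcd with rfl | ⟨hc, hd⟩ | ⟨hc, hd⟩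
        · rw [ha, hb, hcomm z c, hcomm e c]; exact hmul0 c
        · rw [ha, hb, hc, hd, (hz z).1]
          rcases h_me e with h | h <;> rw [h]
          · exact Or.inl rfl
          · exact Or.inr (Or.inl ⟨rfl, rfl⟩)
        · rw [ha, hb, hc, hd]; left; rw [(hz e).1, (hz e).2.1]
      · rcases hcd with rfl | ⟨hc, hd⟩ | ⟨hc, hd⟩
        · rw [ha, hb, hcomm e c, hcomm z c]; exact hr0symm _ _ (hmul0 c)
        · rw [ha, hb, hc, hd]; left; rw [(hz e).2.1, (hz e).1]
        · rw [ha, hb, hc, hd, (hz z).1]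
          rcases h_me e with h | h <;> rw [h]
          · exact Or.inl rfl
          · exact Or.inr (Or.inr ⟨rfl, rfl⟩)
  have hr0ne : r0 ≠ (· = ·) := by
    intro h
    have h2 : r0 z e := Or.inr (Or.inl ⟨rfl, rfl⟩)
    rw [h] at h2
    exact he h2.symm
  -- the monolith relates z and e
  obtain ⟨r, hrcong, hrne, hrmin⟩ := hsi
  have hpair : ∃ p q : S, p ≠ q ∧ r p q := by
    by_contra hc
    push_neg at hc
    apply hrne
    funext p q
    apply propext
    constructor
    · intro hpq
      by_contra hne
      exact hc p q hne hpq
    · rintro rfl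
      exact hrcong.1.refl p
  obtain ⟨p, q, hpq, hrpq⟩ := hpair
  have hrze : r z e := by
    rcases hrmin r0 hr0cong hr0ne p q hrpq with rfl | ⟨rfl, rfl⟩ | ⟨rfl, rfl⟩
    · exact absurd rfl hpq
    · exact hrpq
    · exact hrcong.1.symm hrpq
  -- the annihilator congruence θ
  set th : S → S → Prop :=
    fun u v => (u = z ↔ v = z) ∧ ∀ s, (mul s u = z ↔ mul s v = z) with hthdef
  have hthcong : IsCong add mul th := by
    refine ⟨⟨fun x => ⟨Iff.rfl, fun _ => Iff.rfl⟩, ?_, ?_⟩, ?_, ?_⟩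
    · rintro x y ⟨h1, h2⟩
      exact ⟨h1.symm, fun s => (h2 s).symm⟩
    · rintro x y w ⟨h1, h2⟩ ⟨h3, h4⟩
      exact ⟨h1.trans h3, fun s => (h2 s).trans (h4 s)⟩
    · rintro a b c d ⟨h1, h2⟩ ⟨h3, h4⟩
      constructor
      · rw [hsum_iff, hsum_iff]
        exact and_congr h1 h3
      · intro s
        rw [hldist, hldist, hsum_iff, hsum_iff]
        exact and_congr (h2 s) (h4 s)
    · rintro a b c d ⟨h1, h2⟩ ⟨h3, h4⟩
      constructor
      · calc mul a c = z ↔ mul c a = z := by rw [hcomm]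
          _ ↔ mul c b = z := h2 c
          _ ↔ mul b c = z := by rw [hcomm]
          _ ↔ mul b d = z := h4 b
      · intro s
        calc mul s (mul a c) = z ↔ mul (mul s c) a = z := by rw [hperm]
          _ ↔ mul (mul s c) b = z := h2 (mul s c)
          _ ↔ mul s (mul b c) = z := by rw [hperm]
          _ ↔ mul (mul s b) c = z := by rw [hmul_assoc]
          _ ↔ mul (mul s b) d = z := h4 (mul s b)
          _ ↔ mul s (mul b d) = z := by rw [hmul_assoc]
  intro u v huv
  by_contra hne
  have huv' : th u v := huv
  have hthne : th ≠ (· = ·) := by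
    intro h
    rw [h] at huv'
    exact hne huv'
  have hze : th z e := hrmin th hthcong hthne z e hrze
  exact he (hze.1.mp rfl)

/-- In a commutative almost integral subdirectly irreducible semiring with zero
`z` and least nonzero element `e`: if `a·e ≠ z` then `a` is the greatest
element; and if there is a unity, then `x + y = 1` implies `x = 1` or `y = 1`. -/
theorem stmt_15 {S : Type} (add mul : S → S → S) (hS : AlmostIntegral add mul)
    (hcomm : ∀ a b : S, mul a b = mul b a)
    (hsi : SubIrr add mul) (z : S) (hz : IsZero add mul z)
    (e : S) (he : e ≠ z) (hleast : ∀ x : S, x ≠ z → add e x = x) :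
    (∀ a : S, mul a e ≠ z → ∀ x : S, add x a = a) ∧
      ∀ u : S, (∀ x : S, mul u x = x ∧ mul x u = x) →
        ∀ x y : S, add x y = u → x = u ∨ y = u := by
  classical
  obtain ⟨⟨hadd_comm, hadd_assoc, hmul_assoc, hldist, hrdist⟩, hidem, hai⟩ := hS
  have habs : ∀ a b, add (mul a b) a = a := by
    intro a b
    have h := hai a b
    rwa [hcomm b a, hidem (mul a b)] at h
  have haddz : ∀ x, add x z = x := fun x => by rw [hadd_comm]; exact (hz x).2.2
  have hsum_zero : ∀ a b : S, add a b = z → a = z ∧ b = z := by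
    intro a b h
    constructor
    · have h1 : add a (add a b) = add a b := by rw [← hadd_assoc, hidem]
      rw [h, haddz] at h1; exact h1
    · have h1 : add b (add a b) = add a b := by
        rw [hadd_comm a b, ← hadd_assoc, hidem]
      rw [h, haddz] at h1; exact h1
  have htriv := theta_trivial add mul
    ⟨⟨hadd_comm, hadd_assoc, hmul_assoc, hldist, hrdist⟩, hidem, hai⟩
    hcomm hsi z hz e he hleast
  have part1 : ∀ a : S, mul a e ≠ z → ∀ x : S, add x a = a := by
    intro a hae x
    by_contra hxa
    have hth : ¬ ((add x a = z ↔ a = z) ∧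
        ∀ s, (mul s (add x a) = z ↔ mul s a = z)) := by
      intro h
      exact hxa (htriv (add x a) a h)
    rcases not_and_or.mp hth with h1 | h2
    · have haz : a ≠ z := by
        intro h
        apply hae
        rw [h]
        exact (hz e).1
      have hxaz : add x a = z := by
        by_contra h
        exact h1 (iff_of_false h haz)
      exact haz (hsum_zero x a hxaz).2
    · push_neg at h2
      obtain ⟨s, hs⟩ := h2
      have hPQ : mul s (add x a) ≠ z ∧ mul s a = z := by
        rcases hs with ⟨h, hq⟩ | h
        · refine absurd ((hsum_zero (mul s x) (mul s a) ?_).2) hq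
          rw [← hldist]; exact h
        · exact h
      obtain ⟨hP, hQ⟩ := hPQ
      have hsx : mul s x ≠ z := by
        intro h
        apply hP
        rw [hldist, h, hQ, hidem]
      have hesx : add e (mul s x) = mul s x := hleast _ hsx
      have h1 : mul a (mul s x) = z := by
        calc mul a (mul s x) = mul (mul a s) x := (hmul_assoc a s x).symm
          _ = mul (mul s a) x := by rw [hcomm a s]
          _ = mul z x := by rw [hQ]
          _ = z := (hz x).1
      have h2 : add (mul a e) (mul a (mul s x)) = mul a (mul s x) := by
        rw [← hldist, hesx]
      rw [h1, haddz] at h2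
      exact hae h2
  refine ⟨part1, ?_⟩
  intro u hu x y hxy
  by_cases hx : mul x e = z
  · by_cases hy : mul y e = z
    · exfalso
      have h2 : mul (add x y) e = e := by rw [hxy]; exact (hu e).1
      rw [hrdist, hx, hy, hidem] at h2
      exact he h2.symm
    · right
      have huy : add u y = y := part1 y hy u
      have hyu : add y u = u := by
        rw [← hxy]
        calc add y (add x y) = add (add x y) y := hadd_comm _ _
          _ = add x (add y y) := hadd_assoc _ _ _
          _ = add x y := by rw [hidem]
      calc y = add u y := huy.symm
        _ = add y u := hadd_comm _ _
        _ = u := hyu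
  · left
    have hux : add u x = x := part1 x hx u
    have hxu : add x u = u := by
      rw [← hxy]
      calc add x (add x y) = add (add x x) y := (hadd_assoc _ _ _).symm
        _ = add x y := by rw [hidem]
    calc x = add u x := hux.symm
      _ = add x u := hadd_comm _ _
      _ = u := hxu
end

section
/- Let G be a lattice-ordered group with identity 0 (written multiplicatively as ∗), let u ∈ G with u > 0, and let S = [0, u] with semiring addition a + b = a ∨ b and multiplication a·b = (a ∗ u⁻¹ ∗ b) ∨ 0. Then for all a, b ∈ S with a ≰ b, there exist c, d ∈ S such that c·a·d ≠ 0 and c·b·d = 0. -/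
/-- In the MV-derived semiring `S = [1,u]` of an ℓ-group (written
multiplicatively, identity `1` playing the role of `0`), with multiplication
`a·b = (a * u⁻¹ * b) ⊔ 1`: for all `a, b ∈ S` with `a ≰ b` there are
`c, d ∈ S` with `c·a·d ≠ 1 = c·b·d`. -/
theorem stmt_16 {G : Type} [Lattice G] [Group G]
    [CovariantClass G G (· * ·) (· ≤ ·)]
    [CovariantClass G G (Function.swap (· * ·)) (· ≤ ·)]
    (u : G) (hu : 1 < u) (a b : G)
    (ha : 1 ≤ a ∧ a ≤ u) (hb : 1 ≤ b ∧ b ≤ u) (hab : ¬ a ≤ b) :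
    ∃ c d : G, (1 ≤ c ∧ c ≤ u) ∧ (1 ≤ d ∧ d ≤ u) ∧
      ((((c * u⁻¹ * a) ⊔ 1) * u⁻¹ * d) ⊔ 1 ≠ 1 ∧
        (((c * u⁻¹ * b) ⊔ 1) * u⁻¹ * d) ⊔ 1 = 1) := by
  refine ⟨b⁻¹ * u, u, ⟨?_, ?_⟩, ⟨le_of_lt hu, le_refl u⟩, ?_, ?_⟩
  · rw [← inv_mul_cancel b]
    exact mul_le_mul_right hb.2 b⁻¹
  · have : b⁻¹ ≤ 1 := inv_le_one'.mpr hb.1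
    calc b⁻¹ * u ≤ 1 * u := mul_le_mul_left this u
    _ = u := one_mul u
  · have h1 : b⁻¹ * u * u⁻¹ * a = b⁻¹ * a := by group
    rw [h1]
    have h2 : (b⁻¹ * a ⊔ 1) * u⁻¹ * u = b⁻¹ * a ⊔ 1 := by
      rw [mul_assoc, inv_mul_cancel, mul_one]
    rw [h2, sup_assoc, sup_idem]
    intro h
    exact hab (by simpa [le_antisymm_iff, inv_mul_le_one_iff] using
      le_sup_left.trans_eq h)
  · have h1 : b⁻¹ * u * u⁻¹ * b = 1 := by group
    rw [h1, sup_idem, one_mul, inv_mul_cancel, sup_idem]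
end

section
/- Let G be a lattice-ordered group with identity 0 and let u ∈ G with u > 0. If the interval [0, u] = {x ∈ G : 0 ≤ x ≤ u} has a least element different from 0, then [0, u] is totally ordered. -/
/-!
If `x, y ∈ [1, u]` were incomparable, put `m = x ⊓ y`. Right multiplication by `m⁻¹` preserves
meets, so `x m⁻¹` and `y m⁻¹` are two elements of `[1, u]`, both different from `1`, whose meet
is `m m⁻¹ = 1`. The least nontrivial element `e` would lie below both, hence `e ≤ 1`.
-/

section LatticeOrderedGroup

variable {G : Type*} [Lattice G] [Group G]

theorem mul_inv_inf_inf_mul_inv_inf_eq_one [MulRightMono G] (x y : G) :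
    x * (x ⊓ y)⁻¹ ⊓ y * (x ⊓ y)⁻¹ = 1 := by
  rw [← inf_mul, mul_inv_cancel]

theorem mul_inv_inf_ne_one {x y : G} (h : ¬x ≤ y) : x * (x ⊓ y)⁻¹ ≠ 1 := fun h₁ =>
  h (mul_inv_eq_one.mp h₁ ▸ inf_le_right)

theorem mul_inv_mem_Icc_one [MulLeftMono G] [MulRightMono G] {m x u : G}
    (hm : 1 ≤ m) (hmx : m ≤ x) (hxu : x ≤ u) : x * m⁻¹ ∈ Set.Icc 1 u :=
  ⟨le_mul_inv_iff_mul_le.mpr (by rwa [one_mul]),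
    (mul_inv_le_iff_le_mul.mpr (le_mul_of_one_le_right' hm)).trans hxu⟩

end LatticeOrderedGroup

theorem stmt_17_general {G : Type} [Lattice G] [Group G]
    [CovariantClass G G (· * ·) (· ≤ ·)]
    [CovariantClass G G (Function.swap (· * ·)) (· ≤ ·)]
    (u : G) (e : G) (he : 1 ≤ e ∧ e ≤ u) (hne : e ≠ 1)
    (hleast : ∀ x : G, 1 ≤ x → x ≤ u → x ≠ 1 → e ≤ x) :
    ∀ x y : G, 1 ≤ x → x ≤ u → 1 ≤ y → y ≤ u → x ≤ y ∨ y ≤ x := by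
  intro x y hx hxu hy hyu
  by_contra! hxy
  have hm : 1 ≤ x ⊓ y := le_inf hx hy
  obtain ⟨hx₁, hxu₁⟩ := mul_inv_mem_Icc_one hm inf_le_left hxu
  obtain ⟨hy₁, hyu₁⟩ := mul_inv_mem_Icc_one hm inf_le_right hyu
  have hex := hleast _ hx₁ hxu₁ (mul_inv_inf_ne_one hxy.1)
  have hey := hleast _ hy₁ hyu₁ (inf_comm x y ▸ mul_inv_inf_ne_one hxy.2)
  have he₁ : e ≤ 1 := mul_inv_inf_inf_mul_inv_inf_eq_one x y ▸ le_inf hex hey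
  exact hne (he₁.antisymm he.1)

/-- In an ℓ-group (written multiplicatively, identity `1` playing the role of
`0`), if the interval `[1,u]`, `u > 1`, has a least element different from `1`,
then `[1,u]` is totally ordered. -/
theorem stmt_17 {G : Type} [Lattice G] [Group G]
    [CovariantClass G G (· * ·) (· ≤ ·)]
    [CovariantClass G G (Function.swap (· * ·)) (· ≤ ·)]
    (u : G) (hu : 1 < u) (e : G) (he : 1 ≤ e ∧ e ≤ u) (hne : e ≠ 1)
    (hleast : ∀ x : G, 1 ≤ x → x ≤ u → x ≠ 1 → e ≤ x) :
    ∀ x y : G, 1 ≤ x → x ≤ u → 1 ≤ y → y ≤ u → x ≤ y ∨ y ≤ x :=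
  stmt_17_general u e he hne hleast
end

section
/- Let S be the MV-derived semiring of an ℓ-group G with strong unit interval [0, u] (addition a + b = a ∨ b, multiplication a·b = (a ∗ u⁻¹ ∗ b) ∨ 0), and n ≥ 1. Then M_n(S) is subdirectly irreducible if and only if S has a least element e ≠ 0; and if S is subdirectly irreducible then S is totally ordered. -/
/-- Addition of the MV-derived semiring on the interval `[1, u]` of an ℓ-group
(written multiplicatively, identity `1` playing the role of `0`). -/
def mvAdd {G : Type} [Lattice G] [Group G] (u : G)
    (a b : {x : G // 1 ≤ x ∧ x ≤ u}) : {x : G // 1 ≤ x ∧ x ≤ u} :=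
  ⟨a.1 ⊔ b.1, le_trans a.2.1 le_sup_left, sup_le a.2.2 b.2.2⟩

/-- Multiplication `a·b = (a * u⁻¹ * b) ⊔ 1` of the MV-derived semiring. -/
def mvMul {G : Type} [Lattice G] [Group G]
    [CovariantClass G G (· * ·) (· ≤ ·)]
    [CovariantClass G G (Function.swap (· * ·)) (· ≤ ·)]
    (u : G) (hu : 1 < u)
    (a b : {x : G // 1 ≤ x ∧ x ≤ u}) : {x : G // 1 ≤ x ∧ x ≤ u} :=
  ⟨(a.1 * u⁻¹ * b.1) ⊔ 1, le_sup_right,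
    sup_le
      (calc a.1 * u⁻¹ * b.1
            ≤ 1 * b.1 := mul_le_mul_left (by simpa using mul_le_mul_left a.2.2 u⁻¹) b.1
          _ = b.1 := one_mul _
          _ ≤ u := b.2.2)
      hu.le⟩

/-!
For `t ∈ S = [1, u]` the relation `a ⊔ t = b ⊔ t` is a congruence of `S` (a product with `t` lies
below `t`), nontrivial when `t ≠ 1`, and so is its entrywise extension to matrices. A monolith
therefore relates some `a ≠ b` in `S` with `a ⊔ t = b ⊔ t` for all `t ≠ 1`; if `b ≰ a`, then
`(b a⁻¹) ⊔ 1` is the least element above `1`.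

Conversely, let `e` be least above `1`. Multiplying by matrices that pick out one entry turns a
nontrivial congruence of `M_n(S)` into a nontrivial congruence of `S` on the constant matrices, and
multiplying a related pair `x < y` by `u y⁻¹ e` gives the pair `(1, e)`. Adding the constant matrix
`e` then shows that the congruence contains the entrywise congruence of `e`.

If `x` and `y` are incomparable, `(x y⁻¹) ⊔ 1` and `(y x⁻¹) ⊔ 1` lie above `1` but meet in `1`, so
no least element above `1` exists.
-/

theorem exists_rel_ne_of_ne_eq {T : Type} {r : T → T → Prop} (hr : Equivalence r)
    (hne : r ≠ (· = ·)) : ∃ a b, r a b ∧ a ≠ b := by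
  by_contra! h
  exact hne (funext₂ fun a b => propext ⟨h a b, fun hab => hab ▸ hr.refl a⟩)

theorem ne_eq_of_rel {T : Type} {r : T → T → Prop} {a b : T} (hab : r a b) (hne : a ≠ b) :
    r ≠ (· = ·) :=
  fun h => hne (by rw [h] at hab; exact hab)

theorem SubIrr.exists_ne_rel {T : Type} {add mul : T → T → T} (h : SubIrr add mul) :
    ∃ a b, a ≠ b ∧ ∀ s, IsCong add mul s → s ≠ (· = ·) → s a b := by
  obtain ⟨r, hr, hne, hmin⟩ := h
  obtain ⟨a, b, hab, hne'⟩ := exists_rel_ne_of_ne_eq hr.1 hne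
  exact ⟨a, b, hne', fun s hs hs' => hmin s hs hs' a b hab⟩

section FinSum

variable {S : Type} (add : S → S → S)

theorem finSum_rel {r : S → S → Prop} (hr : ∀ a b c d, r a b → r c d → r (add a c) (add b d)) :
    ∀ {n : ℕ} (f g : Fin (n + 1) → S), (∀ k, r (f k) (g k)) → r (finSum add f) (finSum add g)
  | 0, _, _, h => h 0
  | _ + 1, _, _, h => hr _ _ _ _ (finSum_rel hr _ _ fun k => h k.castSucc) (h _)

theorem finSum_const {x : S} (hx : add x x = x) :
    ∀ {n : ℕ}, finSum add (fun _ : Fin (n + 1) => x) = x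
  | 0 => rfl
  | _ + 1 => by rw [finSum, finSum_const hx, hx]

theorem finSum_eq_single {z : S} (hzl : ∀ x, add z x = x) (hzr : ∀ x, add x z = x) {n : ℕ}
    (f : Fin (n + 1) → S) (i : Fin (n + 1)) (hf : ∀ m, m ≠ i → f m = z) :
    finSum add f = f i := by
  induction n with
  | zero => rw [Fin.fin_one_eq_zero i]; rfl
  | succ n ih =>
    induction i using Fin.lastCases with
    | last =>
      have hz : (fun m : Fin (n + 1) => f m.castSucc) = fun _ => z :=
        funext fun m => hf _ (Fin.castSucc_ne_last m)
      rw [finSum, hz, finSum_const add (hzl z), hzl]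
    | cast j =>
      rw [finSum, ih _ j fun m hm => hf _ (Fin.castSucc_injective _ |>.ne hm),
        hf _ (Fin.castSucc_ne_last j).symm, hzr]

theorem matMul_const {mul : S → S → S} (hidem : ∀ x, add x x = x) {n : ℕ} (x y : S) :
    matMul add mul (n := n) (fun _ _ => x) (fun _ _ => y) = fun _ _ => mul x y :=
  funext₂ fun _ _ => finSum_const add (hidem _)

end FinSum

def Entrywise {S : Type} (r : S → S → Prop) {n : ℕ} (A B : Fin n → Fin n → S) : Prop :=
  ∀ i j, r (A i j) (B i j)

theorem entrywise_ne_eq {S : Type} {r : S → S → Prop} {a b : S} (hab : r a b) (hne : a ≠ b)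
    {n : ℕ} : Entrywise r (n := n + 1) ≠ (· = ·) :=
  ne_eq_of_rel (a := fun _ _ => a) (b := fun _ _ => b) (fun _ _ => hab)
    fun h => hne (congrFun₂ h 0 0)

namespace IsCong

variable {S : Type} {add mul : S → S → S}

theorem entrywise {r : S → S → Prop} (hr : IsCong add mul r) {n : ℕ} :
    IsCong (matAdd add) (matMul add mul) (Entrywise r (n := n + 1)) :=
  ⟨⟨fun _ _ _ => hr.1.refl _, fun h i j => hr.1.symm (h i j),
      fun h₁ h₂ i j => hr.1.trans (h₁ i j) (h₂ i j)⟩,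
    fun _ _ _ _ h₁ h₂ i j => hr.2.1 _ _ _ _ (h₁ i j) (h₂ i j),
    fun _ _ _ _ h₁ h₂ i j => finSum_rel add hr.2.1 _ _ fun k => hr.2.2 _ _ _ _ (h₁ i k) (h₂ k j)⟩

theorem comap_const (hidem : ∀ x, add x x = x) {n : ℕ}
    {s : (Fin (n + 1) → Fin (n + 1) → S) → (Fin (n + 1) → Fin (n + 1) → S) → Prop}
    (hs : IsCong (matAdd add) (matMul add mul) s) :
    IsCong add mul (fun x y => s (fun _ _ => x) (fun _ _ => y)) := by
  refine ⟨⟨fun _ => hs.1.refl _, hs.1.symm, hs.1.trans⟩, fun _ _ _ _ h₁ h₂ => hs.2.1 _ _ _ _ h₁ h₂,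
    fun a b c d h₁ h₂ => ?_⟩
  simpa only [matMul_const add hidem] using hs.2.2 _ _ _ _ h₁ h₂

end IsCong

section MVSemiring

variable {G : Type} [Lattice G] [Group G]

abbrev MvInterval (u : G) : Type := {x : G // 1 ≤ x ∧ x ≤ u}

variable (u : G)

def supCongr (t a b : MvInterval u) : Prop := a.1 ⊔ t.1 = b.1 ⊔ t.1

theorem mvAdd_val (a b : MvInterval u) : (mvAdd u a b).1 = a.1 ⊔ b.1 := rfl

theorem mvAdd_self (a : MvInterval u) : mvAdd u a a = a := Subtype.ext (sup_idem _)

variable (hu : 1 < u)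

def mvBot : MvInterval u := ⟨1, le_rfl, hu.le⟩

def mvTop : MvInterval u := ⟨u, hu.le, le_rfl⟩

theorem mvAdd_bot_left (a : MvInterval u) : mvAdd u (mvBot u hu) a = a :=
  Subtype.ext (sup_eq_right.mpr a.2.1)

theorem mvAdd_bot_right (a : MvInterval u) : mvAdd u a (mvBot u hu) = a :=
  Subtype.ext (sup_eq_left.mpr a.2.1)

theorem supCongr_bot (t : MvInterval u) : supCongr u t (mvBot u hu) t :=
  (sup_eq_right.mpr t.2.1).trans (sup_idem _).symm

variable [CovariantClass G G (· * ·) (· ≤ ·)] [CovariantClass G G (Function.swap (· * ·)) (· ≤ ·)]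

def mvSub (b a : MvInterval u) : MvInterval u :=
  ⟨(b.1 * a.1⁻¹)⁺ᵐ, one_le_oneLePart _,
    sup_le (mul_le_of_le_of_le_one b.2.2 (inv_le_one'.mpr a.2.1)) (b.2.1.trans b.2.2)⟩

theorem mvSub_val_eq_one_iff (b a : MvInterval u) : (mvSub u b a).1 = 1 ↔ b.1 ≤ a.1 :=
  sup_eq_right.trans mul_inv_le_one_iff_le

theorem mvSub_inf_mvSub (a b : MvInterval u) : (mvSub u a b).1 ⊓ (mvSub u b a).1 = 1 := by
  have h := oneLePart_inf_leOnePart_eq_one (a.1 * b.1⁻¹)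
  rwa [leOnePart_def, mul_inv_rev, inv_inv, ← oneLePart_def] at h

theorem le_total_of_exists_least
    (h : ∃ e : MvInterval u, e.1 ≠ 1 ∧ ∀ x : MvInterval u, x.1 ≠ 1 → e.1 ≤ x.1)
    (x y : MvInterval u) : x.1 ≤ y.1 ∨ y.1 ≤ x.1 := by
  obtain ⟨e, he, hle⟩ := h
  by_contra! hxy
  refine he (le_antisymm ?_ e.2.1)
  calc e.1 ≤ (mvSub u x y).1 ⊓ (mvSub u y x).1 :=
        le_inf (hle _ (mt (mvSub_val_eq_one_iff u x y).1 hxy.1))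
          (hle _ (mt (mvSub_val_eq_one_iff u y x).1 hxy.2))
    _ = 1 := mvSub_inf_mvSub u x y

theorem exists_least_of_forall_sup_eq {a b : MvInterval u} (hne : a ≠ b)
    (h : ∀ t : MvInterval u, t.1 ≠ 1 → a.1 ⊔ t.1 = b.1 ⊔ t.1) :
    ∃ e : MvInterval u, e.1 ≠ 1 ∧ ∀ x : MvInterval u, x.1 ≠ 1 → e.1 ≤ x.1 := by
  wlog hba : ¬ b.1 ≤ a.1 generalizing a b
  · exact this hne.symm (fun t ht => (h t ht).symm)
      fun hab => hne (Subtype.ext (le_antisymm hab (not_not.mp hba)))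
  refine ⟨mvSub u b a, mt (mvSub_val_eq_one_iff u b a).1 hba, fun x hx => sup_le ?_ x.2.1⟩
  calc b.1 * a.1⁻¹ ≤ (a.1 ⊔ x.1) * a.1⁻¹ := mul_le_mul_left (h x hx ▸ le_sup_left) _
    _ = 1 ⊔ x.1 * a.1⁻¹ := by rw [sup_mul, mul_inv_cancel]
    _ ≤ x.1 := sup_le x.2.1 (mul_le_of_le_one_right' (inv_le_one'.mpr a.2.1))

theorem mvMul_val (a b : MvInterval u) : (mvMul u hu a b).1 = a.1 * u⁻¹ * b.1 ⊔ 1 := rfl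

theorem mvMul_bot_left (a : MvInterval u) : mvMul u hu (mvBot u hu) a = mvBot u hu :=
  Subtype.ext <| sup_eq_right.mpr <| by rw [mvBot, one_mul]; exact inv_mul_le_one_iff.mpr a.2.2

theorem mvMul_bot_right (a : MvInterval u) : mvMul u hu a (mvBot u hu) = mvBot u hu :=
  Subtype.ext <| sup_eq_right.mpr <| by rw [mvBot, mul_one]; exact mul_inv_le_one_iff_le.mpr a.2.2

theorem mvMul_top_left (a : MvInterval u) : mvMul u hu (mvTop u hu) a = a :=
  Subtype.ext <| by rw [mvMul_val, mvTop, mul_inv_cancel, one_mul, sup_eq_left.mpr a.2.1]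

theorem mvMul_top_right (a : MvInterval u) : mvMul u hu a (mvTop u hu) = a :=
  Subtype.ext <| by rw [mvMul_val, mvTop, inv_mul_cancel_right, sup_eq_left.mpr a.2.1]

theorem mvMul_mvAdd_mvAdd_sup (a c t : MvInterval u) :
    (mvMul u hu (mvAdd u a t) (mvAdd u c t)).1 ⊔ t.1 = (mvMul u hu a c).1 ⊔ t.1 := by
  have hl : ∀ x : MvInterval u, ∀ g, x.1 * u⁻¹ * g ≤ g := fun x _ =>
    mul_le_of_le_one_left' (mul_inv_le_one_iff_le.mpr x.2.2)
  have hr : ∀ x : MvInterval u, ∀ g, g * u⁻¹ * x.1 ≤ g := fun x _ => by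
    rw [mul_assoc]; exact mul_le_of_le_one_right' (inv_mul_le_one_iff.mpr x.2.2)
  refine le_antisymm ?_ (sup_le_sup_right (sup_le_sup_right ?_ _) _)
  · simp only [mvMul_val, mvAdd_val, mul_sup, sup_mul, sup_le_iff]
    exact ⟨⟨⟨⟨le_sup_of_le_left le_sup_left, le_sup_of_le_right (hr c _)⟩,
      le_sup_of_le_right (hl a _), le_sup_of_le_right (hl t _)⟩, le_sup_of_le_left le_sup_right⟩,
      le_sup_right⟩
  · exact mul_le_mul' (mul_le_mul_left le_sup_left _) le_sup_left

theorem isCong_supCongr (t : MvInterval u) : IsCong (mvAdd u) (mvMul u hu) (supCongr u t) := by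
  refine ⟨⟨fun _ => rfl, Eq.symm, Eq.trans⟩, fun a b c d h₁ h₂ => ?_, fun a b c d h₁ h₂ => ?_⟩
  · rw [supCongr, mvAdd_val, mvAdd_val, sup_sup_distrib_right, h₁, h₂, ← sup_sup_distrib_right]
  · have h₁' : mvAdd u a t = mvAdd u b t := Subtype.ext h₁
    have h₂' : mvAdd u c t = mvAdd u d t := Subtype.ext h₂
    rw [supCongr, ← mvMul_mvAdd_mvAdd_sup, h₁', h₂', mvMul_mvAdd_mvAdd_sup]

theorem IsCong.rel_bot_of_isLeast {σ : MvInterval u → MvInterval u → Prop}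
    (hσ : IsCong (mvAdd u) (mvMul u hu) σ) {e : MvInterval u}
    (hle : ∀ x : MvInterval u, x.1 ≠ 1 → e.1 ≤ x.1) {a b : MvInterval u} (hab : σ a b)
    (hne : a ≠ b) : σ (mvBot u hu) e := by
  obtain ⟨x, y, hxy, hyx, hσxy⟩ : ∃ x y : MvInterval u, x.1 ≤ y.1 ∧ ¬ y.1 ≤ x.1 ∧ σ x y := by
    by_cases hba : b.1 ≤ a.1
    · exact ⟨b, a, hba, fun h => hne (Subtype.ext (le_antisymm h hba)), hσ.1.symm hab⟩
    · refine ⟨a, mvAdd u a b, le_sup_left, fun h => hba (le_sup_right.trans h), ?_⟩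
      simpa only [mvAdd_self] using hσ.2.1 _ _ _ _ (hσ.1.refl a) hab
  have hey : e.1 ≤ y.1 * x.1⁻¹ := by
    simpa only [mvSub, oneLePart_def, sup_eq_left.mpr (le_mul_inv_iff_le.mpr hxy)] using
      hle (mvSub u y x) (mt (mvSub_val_eq_one_iff u y x).1 hyx)
  let w : MvInterval u := ⟨u * y.1⁻¹ * e.1,
    one_le_mul (le_mul_inv_iff_le.mpr y.2.2) e.2.1,
    by rw [mul_assoc]; exact mul_le_of_le_one_right' (inv_mul_le_one_iff.mpr
      (hey.trans (mul_le_of_le_one_right' (inv_le_one'.mpr x.2.1))))⟩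
  have hxw : mvMul u hu x w = mvBot u hu := Subtype.ext <| sup_eq_right.mpr <| by
    show x.1 * u⁻¹ * (u * y.1⁻¹ * e.1) ≤ 1
    rw [mul_assoc, mul_assoc, inv_mul_cancel_left, ← le_inv_mul_iff_mul_le, mul_one,
      inv_mul_le_iff_le_mul]
    exact hey
  have hyw : mvMul u hu y w = e := Subtype.ext <| by
    simp only [mvMul_val, w, mul_assoc, inv_mul_cancel_left, mul_inv_cancel_left]
    exact sup_eq_left.mpr e.2.1
  simpa only [hxw, hyw] using hσ.2.2 _ _ _ _ hσxy (hσ.1.refl w)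

section Matrix

variable {n : ℕ}

def rowPicker (i : Fin (n + 1)) : Fin (n + 1) → Fin (n + 1) → MvInterval u :=
  fun _ m => if m = i then mvTop u hu else mvBot u hu

def colPicker (j : Fin (n + 1)) : Fin (n + 1) → Fin (n + 1) → MvInterval u :=
  fun m _ => if m = j then mvTop u hu else mvBot u hu

theorem rowPicker_matMul (i : Fin (n + 1)) (A : Fin (n + 1) → Fin (n + 1) → MvInterval u) :
    matMul (mvAdd u) (mvMul u hu) (rowPicker u hu i) A = fun _ q => A i q := by
  funext p q
  refine (finSum_eq_single _ (mvAdd_bot_left u hu) (mvAdd_bot_right u hu) _ i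
    fun m hm => ?_).trans ?_
  · simp only [rowPicker, if_neg hm, mvMul_bot_left]
  · simp only [rowPicker, ↓reduceIte, mvMul_top_left]

theorem matMul_colPicker (j : Fin (n + 1)) (A : Fin (n + 1) → Fin (n + 1) → MvInterval u) :
    matMul (mvAdd u) (mvMul u hu) A (colPicker u hu j) = fun p _ => A p j := by
  funext p q
  refine (finSum_eq_single _ (mvAdd_bot_left u hu) (mvAdd_bot_right u hu) _ j
    fun m hm => ?_).trans ?_
  · simp only [colPicker, if_neg hm, mvMul_bot_right]
  · simp only [colPicker, ↓reduceIte, mvMul_top_right]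

theorem IsCong.entrywise_supCongr_le
    {s : (Fin (n + 1) → Fin (n + 1) → MvInterval u) →
      (Fin (n + 1) → Fin (n + 1) → MvInterval u) → Prop}
    (hs : IsCong (matAdd (mvAdd u)) (matMul (mvAdd u) (mvMul u hu)) s) (hsne : s ≠ (· = ·))
    {e : MvInterval u} (hle : ∀ x : MvInterval u, x.1 ≠ 1 → e.1 ≤ x.1)
    {A B : Fin (n + 1) → Fin (n + 1) → MvInterval u} (hAB : Entrywise (supCongr u e) A B) :
    s A B := by
  obtain ⟨A₀, B₀, hs₀, hne₀⟩ := exists_rel_ne_of_ne_eq hs.1 hsne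
  obtain ⟨i, hi⟩ := Function.ne_iff.mp hne₀
  obtain ⟨j, hij⟩ := Function.ne_iff.mp hi
  have hconst : s (fun _ _ => A₀ i j) (fun _ _ => B₀ i j) := by
    simpa only [rowPicker_matMul, matMul_colPicker] using
      hs.2.2 _ _ _ _ (hs.2.2 _ _ _ _ (hs.1.refl (rowPicker u hu i)) hs₀)
        (hs.1.refl (colPicker u hu j))
  have hbot : s (fun _ _ => mvBot u hu) (fun _ _ => e) :=
    (hs.comap_const (mvAdd_self u)).rel_bot_of_isLeast u hu hle hconst hij
  have hadd : ∀ C, s C (matAdd (mvAdd u) C fun _ _ => e) := fun C => by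
    have hC : matAdd (mvAdd u) C (fun _ _ => mvBot u hu) = C :=
      funext₂ fun _ _ => mvAdd_bot_right u hu _
    simpa only [hC] using hs.2.1 _ _ _ _ (hs.1.refl C) hbot
  have hAB' : matAdd (mvAdd u) A (fun _ _ => e) = matAdd (mvAdd u) B (fun _ _ => e) :=
    funext₂ fun p q => Subtype.ext (hAB p q)
  exact hs.1.trans (hadd A) (hAB' ▸ hs.1.symm (hadd B))

end Matrix

end MVSemiring

/-- For the MV-derived semiring `S = [1,u]` of an ℓ-group and any `n ≥ 1`:
`M_n(S)` is subdirectly irreducible iff `S` has a least element `e ≠ 1`;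
moreover if `S` is subdirectly irreducible then `S` is totally ordered. -/
theorem stmt_18 {G : Type} [Lattice G] [Group G]
    [CovariantClass G G (· * ·) (· ≤ ·)]
    [CovariantClass G G (Function.swap (· * ·)) (· ≤ ·)]
    (u : G) (hu : 1 < u) :
    (∀ m : ℕ,
      SubIrr (T := Fin (m + 1) → Fin (m + 1) → {x : G // 1 ≤ x ∧ x ≤ u})
          (matAdd (mvAdd u)) (matMul (mvAdd u) (mvMul u hu)) ↔
        ∃ e : {x : G // 1 ≤ x ∧ x ≤ u}, e.1 ≠ 1 ∧
          ∀ x : {x : G // 1 ≤ x ∧ x ≤ u}, x.1 ≠ 1 → e.1 ≤ x.1) ∧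
      (SubIrr (mvAdd u) (mvMul u hu) →
        ∀ x y : {x : G // 1 ≤ x ∧ x ≤ u}, x.1 ≤ y.1 ∨ y.1 ≤ x.1) := by
  have hne : ∀ t : MvInterval u, t.1 ≠ 1 → mvBot u hu ≠ t :=
    fun t ht h => ht (congrArg (·.1) h).symm
  refine ⟨fun m => ⟨fun hSI => ?_, fun ⟨e, he, hle⟩ => ?_⟩, fun hSI => ?_⟩
  · obtain ⟨A, B, hAB, hrel⟩ := hSI.exists_ne_rel
    obtain ⟨i, hi⟩ := Function.ne_iff.mp hAB
    obtain ⟨j, hij⟩ := Function.ne_iff.mp hi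
    exact exists_least_of_forall_sup_eq u hij fun t ht =>
      hrel _ (isCong_supCongr u hu t).entrywise
        (entrywise_ne_eq (supCongr_bot u hu t) (hne t ht)) i j
  · exact ⟨Entrywise (supCongr u e), (isCong_supCongr u hu e).entrywise,
      entrywise_ne_eq (supCongr_bot u hu e) (hne e he),
      fun s hs hsne _ _ hAB => hs.entrywise_supCongr_le u hu hsne hle hAB⟩
  · obtain ⟨a, b, hab, hrel⟩ := hSI.exists_ne_rel
    exact le_total_of_exists_least u <| exists_least_of_forall_sup_eq u hab fun t ht =>
      hrel _ (isCong_supCongr u hu t) (ne_eq_of_rel (supCongr_bot u hu t) (hne t ht))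
end

section
/- Let S be an almost integral semiring without a unity, and let S̄ = S ∪ {u} be the semiring obtained by adjoining a new element u with a·u = u·a = a and u + a = a + u = u for all a ∈ S ∪ {u}. Then S is subdirectly irreducible if and only if S̄ is subdirectly irreducible. -/
/-- Addition on `S̄ = S ∪ {u}` (`u` modelled by `none`): `u` is absorbing
for addition. -/
def extAdd {S : Type} (add : S → S → S) : Option S → Option S → Option S
  | some a, some b => some (add a b)
  | _, _ => none

/-- Multiplication on `S̄ = S ∪ {u}`: `u` is a unity. -/
def extMul {S : Type} (mul : S → S → S) : Option S → Option S → Option S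
  | some a, some b => some (mul a b)
  | some a, none => some a
  | none, some b => some b
  | none, none => none

namespace Stmt19Aux

variable {S : Type}

/-- Extension of a relation on `S` to `Option S` relating `none` only to itself. -/
def extRel (s : S → S → Prop) (x y : Option S) : Prop :=
  (∃ a b, x = some a ∧ y = some b ∧ s a b) ∨ (x = none ∧ y = none)

lemma refl_ne_eq {T : Type} {r : T → T → Prop} (hrefl : ∀ a, r a a) :
    r ≠ (· = ·) ↔ ∃ a b, a ≠ b ∧ r a b := by
  constructor
  · intro h
    by_contra hc
    push_neg at hc
    apply h
    funext a b
    apply propext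
    refine ⟨fun hr => ?_, fun e => e ▸ hrefl a⟩
    by_contra hne
    exact hc a b hne hr
  · rintro ⟨a, b, hne, hr⟩ h
    rw [h] at hr
    exact hne hr

lemma cong_restr (add mul : S → S → S) {t : Option S → Option S → Prop}
    (ht : IsCong (extAdd add) (extMul mul) t) :
    IsCong add mul (fun a b => t (some a) (some b)) := by
  obtain ⟨⟨hrefl, hsymm, htrans⟩, hadd, hmul⟩ := ht
  refine ⟨⟨fun a => hrefl _, fun h => hsymm h, fun h1 h2 => htrans h1 h2⟩, ?_, ?_⟩
  · intro a b c d h1 h2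
    exact hadd (some a) (some b) (some c) (some d) h1 h2
  · intro a b c d h1 h2
    exact hmul (some a) (some b) (some c) (some d) h1 h2

lemma cong_ext (add mul : S → S → S) {s : S → S → Prop}
    (hs : IsCong add mul s) : IsCong (extAdd add) (extMul mul) (extRel s) := by
  obtain ⟨⟨hrefl, hsymm, htrans⟩, hadd, hmul⟩ := hs
  refine ⟨⟨?_, ?_, ?_⟩, ?_, ?_⟩
  · rintro (_ | a)
    · exact Or.inr ⟨rfl, rfl⟩
    · exact Or.inl ⟨a, a, rfl, rfl, hrefl a⟩
  · rintro x y (⟨a, b, rfl, rfl, hab⟩ | ⟨rfl, rfl⟩)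
    · exact Or.inl ⟨b, a, rfl, rfl, hsymm hab⟩
    · exact Or.inr ⟨rfl, rfl⟩
  · rintro x y z (⟨a, b, rfl, rfl, hab⟩ | ⟨rfl, rfl⟩) h2
    · rcases h2 with ⟨b', c, hb, rfl, hbc⟩ | ⟨hb, rfl⟩
      · obtain rfl : b = b' := by injection hb
        exact Or.inl ⟨a, c, rfl, rfl, htrans hab hbc⟩
      · exact absurd hb (by simp)
    · rcases h2 with ⟨b', c, hb, rfl, hbc⟩ | ⟨hb, rfl⟩
      · exact absurd hb (by simp)
      · exact Or.inr ⟨rfl, rfl⟩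
  · rintro x y w z (⟨a, b, rfl, rfl, hab⟩ | ⟨rfl, rfl⟩)
        (⟨c, d, rfl, rfl, hcd⟩ | ⟨rfl, rfl⟩)
    · exact Or.inl ⟨_, _, rfl, rfl, hadd a b c d hab hcd⟩
    · exact Or.inr ⟨rfl, rfl⟩
    · exact Or.inr ⟨rfl, rfl⟩
    · exact Or.inr ⟨rfl, rfl⟩
  · rintro x y w z (⟨a, b, rfl, rfl, hab⟩ | ⟨rfl, rfl⟩)
        (⟨c, d, rfl, rfl, hcd⟩ | ⟨rfl, rfl⟩)
    · exact Or.inl ⟨_, _, rfl, rfl, hmul a b c d hab hcd⟩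
    · exact Or.inl ⟨a, b, rfl, rfl, hab⟩
    · exact Or.inl ⟨c, d, rfl, rfl, hcd⟩
    · exact Or.inr ⟨rfl, rfl⟩

/-- If a congruence on `S̄` relates `u` to an element of `S`, then (since `S`
has no unity) it must relate two distinct elements of `S`. -/
lemma key (add mul : S → S → S)
    (hnounit : ¬ ∃ u : S, ∀ x : S, mul u x = x ∧ mul x u = x)
    {t : Option S → Option S → Prop}
    (ht : IsCong (extAdd add) (extMul mul) t) {a : S}
    (hta : t none (some a)) : ∃ x y : S, x ≠ y ∧ t (some x) (some y) := by
  by_contra hc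
  push_neg at hc
  apply hnounit
  obtain ⟨⟨hrefl, hsymm, htrans⟩, hadd, hmul⟩ := ht
  refine ⟨a, fun x => ⟨?_, ?_⟩⟩
  · have h1 : t (some x) (some (mul a x)) :=
      hmul none (some a) (some x) (some x) hta (hrefl _)
    by_contra h
    exact hc x (mul a x) (fun e => h e.symm) h1
  · have h2 : t (some x) (some (mul x a)) :=
      hmul (some x) (some x) none (some a) (hrefl _) hta
    by_contra h
    exact hc x (mul x a) (fun e => h e.symm) h2

/-- Any congruence on `S̄` that is not the equality relates two distinct
elements of `S`. -/
lemma nontriv_restr (add mul : S → S → S)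
    (hnounit : ¬ ∃ u : S, ∀ x : S, mul u x = x ∧ mul x u = x)
    {t : Option S → Option S → Prop}
    (ht : IsCong (extAdd add) (extMul mul) t) (htne : t ≠ (· = ·)) :
    ∃ x y : S, x ≠ y ∧ t (some x) (some y) := by
  obtain ⟨x, y, hxy, hrel⟩ := (refl_ne_eq ht.1.refl).1 htne
  match x, y with
  | some a, some b =>
    exact ⟨a, b, fun e => hxy (by rw [e]), hrel⟩
  | none, some a => exact key add mul hnounit ht hrel
  | some a, none => exact key add mul hnounit ht (ht.1.symm hrel)
  | none, none => exact absurd rfl hxy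

end Stmt19Aux

open Stmt19Aux in
/-- For an almost integral semiring `S` without a unity, `S` is subdirectly
irreducible iff the semiring `S̄` obtained by adjoining a greatest element `u`
acting as unity is subdirectly irreducible. -/
theorem stmt_19 {S : Type} (add mul : S → S → S) (hS : AlmostIntegral add mul)
    (hnounit : ¬ ∃ u : S, ∀ x : S, mul u x = x ∧ mul x u = x) :
    SubIrr add mul ↔ SubIrr (extAdd add) (extMul mul) := by
  constructor
  · rintro ⟨r, hr, hrne, hrmin⟩
    refine ⟨extRel r, cong_ext add mul hr, ?_, ?_⟩
    · obtain ⟨a, b, hab, hrab⟩ := (refl_ne_eq hr.1.refl).1 hrne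
      exact (refl_ne_eq (cong_ext add mul hr).1.refl).2
        ⟨some a, some b, fun e => hab (by injection e),
          Or.inl ⟨a, b, rfl, rfl, hrab⟩⟩
    · intro s hs hsne x y hxy
      obtain ⟨a, b, hab, hsab⟩ := nontriv_restr add mul hnounit hs hsne
      have hres : (fun a b => s (some a) (some b)) ≠ (· = ·) :=
        (refl_ne_eq fun a => hs.1.refl (some a)).2 ⟨a, b, hab, hsab⟩
      rcases hxy with ⟨a', b', rfl, rfl, hab'⟩ | ⟨rfl, rfl⟩
      · exact hrmin _ (cong_restr add mul hs) hres a' b' hab'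
      · exact hs.1.refl none
  · rintro ⟨t, ht, htne, htmin⟩
    refine ⟨fun a b => t (some a) (some b), cong_restr add mul ht, ?_, ?_⟩
    · obtain ⟨a, b, hab, hrel⟩ := nontriv_restr add mul hnounit ht htne
      exact (refl_ne_eq fun a => ht.1.refl (some a)).2 ⟨a, b, hab, hrel⟩
    · intro s hs hsne a b hab
      obtain ⟨x, y, hxy, hsxy⟩ := (refl_ne_eq hs.1.refl).1 hsne
      have hextne : extRel s ≠ (· = ·) :=
        (refl_ne_eq (cong_ext add mul hs).1.refl).2
          ⟨some x, some y, fun e => hxy (by injection e),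
            Or.inl ⟨x, y, rfl, rfl, hsxy⟩⟩
      have := htmin (extRel s) (cong_ext add mul hs) hextne (some a) (some b) hab
      rcases this with ⟨a', b', ha, hb, hs'⟩ | ⟨ha, _⟩
      · obtain rfl : a = a' := by injection ha
        obtain rfl : b = b' := by injection hb
        exact hs'
      · exact absurd ha (by simp)
end
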